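/- arXiv:1003.4879 — 5 statements merged into one kernel-verified Lean document; each statement's English description precedes it below -/
import Mathlib

section
/- Let X be a k1-dimensional and Y a k2-dimensional subspace of F_q^n. Then every nonzero entry of the matrix X̃_μ − Ỹ_μ lies in a column indexed by ρ(X,Y) = { i : v(X)_i = 0 and v(Y)_i = 0 }; that is, all columns of X̃_μ − Ỹ_μ indexed by coordinates outside ρ(X,Y) are zero. -/
/-- `M` is in reduced row echelon form with pivot (leading-one) column of row `i`
given by `piv i`: pivots strictly move right, each leading coefficient is `1`,
it is the first nonzero entry of its row, and it is the only nonzero entry of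
its column. -/
def IsRREFWithPivots {F : Type*} [Field F] {k n : ℕ}
    (M : Matrix (Fin k) (Fin n) F) (piv : Fin k → Fin n) : Prop :=
  StrictMono piv ∧
  (∀ i, M i (piv i) = 1) ∧
  (∀ (i : Fin k) (j : Fin n), j < piv i → M i j = 0) ∧
  (∀ i i' : Fin k, i' ≠ i → M i' (piv i) = 0)

/-- `M` is in reduced row echelon form. -/
def IsRREF {F : Type*} [Field F] {k n : ℕ} (M : Matrix (Fin k) (Fin n) F) : Prop :=
  ∃ piv, IsRREFWithPivots M piv

/-- The identifying (binary) vector associated with pivot columns `piv`: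
its ones are exactly in the pivot positions. -/
def idVec {k n : ℕ} (piv : Fin k → Fin n) : Fin n → Bool :=
  fun j => decide (∃ i, piv i = j)

/-- The subspace distance `d_S(X,Y) = dim X + dim Y - 2 dim (X ⊓ Y)`. -/
noncomputable def subDist {F : Type*} [Field F] {n : ℕ} (X Y : Submodule F (Fin n → F)) : ℕ :=
  Module.finrank F X + Module.finrank F Y - 2 * Module.finrank F ↥(X ⊓ Y)

/-- If `v` is in the row space of an RREF matrix `M` and the leading position of
`v` is `j`, then `j` is a pivot column of `M`. -/
lemma rref_leading {F : Type*} [Field F] {k n : ℕ}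
    {M : Matrix (Fin k) (Fin n) F} {piv : Fin k → Fin n}
    (h : IsRREFWithPivots M piv) {v : Fin n → F}
    (hv : v ∈ Submodule.span F (Set.range M)) {j : Fin n}
    (hj : v j ≠ 0) (hlt : ∀ j' : Fin n, j' < j → v j' = 0) :
    ∃ r, piv r = j := by
  obtain ⟨_, h1, h0, hcol⟩ := h
  obtain ⟨c, hc⟩ := (Submodule.mem_span_range_iff_exists_fun F).mp hv
  have hcr : ∀ r, c r = v (piv r) := by
    intro r
    rw [← hc, Finset.sum_apply]
    rw [Finset.sum_eq_single r]
    · simp [h1 r]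
    · intro b _ hb
      simp [hcol r b hb]
    · simp
  by_contra hno
  push_neg at hno
  apply hj
  rw [← hc, Finset.sum_apply]
  apply Finset.sum_eq_zero
  intro r _
  rcases lt_trichotomy (piv r) j with hlt' | heq | hgt
  · simp [hcr r, hlt _ hlt']
  · exact absurd heq (hno r)
  · simp [h0 r j hgt]

/-- Nonzero entries of `X̃_μ - Ỹ_μ` can appear only in columns
indexed by `ρ(X,Y) = {i : v(X)_i = 0 and v(Y)_i = 0}`.

Here `MX = RE(X)`, `MY = RE(Y)` (with pivot functions `pivX`, `pivY`),
`P = RE(RE(X) * Y_{μ^C})` and `Q = RE(RE(Y) * X_{μ^C})` (with pivot functions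
`pivP`, `pivQ`), and `X̃_μ` (resp. `Ỹ_μ`) is the submatrix of `P` (resp. `Q`)
consisting of the rows whose leading ones are in the columns indexed by
`μ(X,Y)`; its row with leading one in column `c ∈ μ(X,Y)` is row `sX c` of `P`
(resp. row `sY c` of `Q`). -/
theorem tildeX_sub_tildeY_support {F : Type*} [Field F] [Fintype F] {n k1 k2 : ℕ}
    (X Y : Submodule F (Fin n → F))
    (MX : Matrix (Fin k1) (Fin n) F) (pivX : Fin k1 → Fin n)
    (hMX : IsRREFWithPivots MX pivX)
    (hsX : Submodule.span F (Set.range MX) = X)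
    (MY : Matrix (Fin k2) (Fin n) F) (pivY : Fin k2 → Fin n)
    (hMY : IsRREFWithPivots MY pivY)
    (hsY : Submodule.span F (Set.range MY) = Y)
    {rX rY : ℕ}
    (P : Matrix (Fin rX) (Fin n) F) (pivP : Fin rX → Fin n)
    (hP : IsRREFWithPivots P pivP)
    (hPspan : Submodule.span F (Set.range P) =
      Submodule.span F (Set.range (Matrix.fromRows MX
        (Matrix.of fun (i : {i : Fin k2 // idVec pivX (pivY i) = false}) j => MY i.1 j))))
    (Q : Matrix (Fin rY) (Fin n) F) (pivQ : Fin rY → Fin n)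
    (hQ : IsRREFWithPivots Q pivQ)
    (hQspan : Submodule.span F (Set.range Q) =
      Submodule.span F (Set.range (Matrix.fromRows MY
        (Matrix.of fun (i : {i : Fin k1 // idVec pivY (pivX i) = false}) j => MX i.1 j))))
    (sX : {c : Fin n // idVec pivX c = true ∧ idVec pivY c = true} → Fin rX)
    (hsXsel : ∀ c, pivP (sX c) = c.1)
    (sY : {c : Fin n // idVec pivX c = true ∧ idVec pivY c = true} → Fin rY)
    (hsYsel : ∀ c, pivQ (sY c) = c.1) :
    ∀ (c : {c : Fin n // idVec pivX c = true ∧ idVec pivY c = true}) (j : Fin n),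
      ¬(idVec pivX j = false ∧ idVec pivY j = false) →
      P (sX c) j - Q (sY c) j = 0 := by
  intro c j hj
  by_cases hjc : j = c.1
  · have h1 : P (sX c) j = 1 := by
      have := hP.2.1 (sX c); rwa [hsXsel c, ← hjc] at this
    have h2 : Q (sY c) j = 1 := by
      have := hQ.2.1 (sY c); rwa [hsYsel c, ← hjc] at this
    rw [h1, h2, sub_self]
  · -- j is a pivot column of X or of Y
    have hjor : (∃ i, pivX i = j) ∨ (∃ i, pivY i = j) := by
      by_contra hcon
      push_neg at hcon
      exact hj ⟨by simp [idVec, hcon.1], by simp [idVec, hcon.2]⟩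
    -- j is a pivot column of P
    have hPj : ∃ r, pivP r = j := by
      by_cases hx : ∃ i, pivX i = j
      · obtain ⟨i, hi⟩ := hx
        have hmem : MX i ∈ Submodule.span F (Set.range P) := by
          rw [hPspan]
          exact Submodule.subset_span ⟨Sum.inl i, rfl⟩
        refine rref_leading hP hmem (j := j) ?_ ?_
        · rw [← hi, hMX.2.1 i]; exact one_ne_zero
        · intro j' hj'; exact hMX.2.2.1 i j' (hi ▸ hj')
      · have hy : ∃ i, pivY i = j := hjor.resolve_left hx
        obtain ⟨i, hi⟩ := hy
        have hfalse : idVec pivX (pivY i) = false := by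
          simp only [idVec, decide_eq_false_iff_not, hi]
          exact hx
        have hmem : MY i ∈ Submodule.span F (Set.range P) := by
          rw [hPspan]
          exact Submodule.subset_span ⟨Sum.inr ⟨i, hfalse⟩, rfl⟩
        refine rref_leading hP hmem (j := j) ?_ ?_
        · rw [← hi, hMY.2.1 i]; exact one_ne_zero
        · intro j' hj'; exact hMY.2.2.1 i j' (hi ▸ hj')
    -- j is a pivot column of Q
    have hQj : ∃ r, pivQ r = j := by
      by_cases hy : ∃ i, pivY i = j
      · obtain ⟨i, hi⟩ := hy
        have hmem : MY i ∈ Submodule.span F (Set.range Q) := by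
          rw [hQspan]
          exact Submodule.subset_span ⟨Sum.inl i, rfl⟩
        refine rref_leading hQ hmem (j := j) ?_ ?_
        · rw [← hi, hMY.2.1 i]; exact one_ne_zero
        · intro j' hj'; exact hMY.2.2.1 i j' (hi ▸ hj')
      · have hx : ∃ i, pivX i = j := hjor.resolve_right hy
        obtain ⟨i, hi⟩ := hx
        have hfalse : idVec pivY (pivX i) = false := by
          simp only [idVec, decide_eq_false_iff_not, hi]
          exact hy
        have hmem : MX i ∈ Submodule.span F (Set.range Q) := by
          rw [hQspan]
          exact Submodule.subset_span ⟨Sum.inr ⟨i, hfalse⟩, rfl⟩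
        refine rref_leading hQ hmem (j := j) ?_ ?_
        · rw [← hi, hMX.2.1 i]; exact one_ne_zero
        · intro j' hj'; exact hMX.2.2.1 i j' (hi ▸ hj')
    obtain ⟨rP, hrP⟩ := hPj
    obtain ⟨rQ, hrQ⟩ := hQj
    have hne1 : sX c ≠ rP := by
      intro h; apply hjc; rw [← hsXsel c, h, hrP]
    have hne2 : sY c ≠ rQ := by
      intro h; apply hjc; rw [← hsYsel c, h, hrQ]
    have e1 : P (sX c) j = 0 := by
      have := hP.2.2.2 rP (sX c) hne1; rwa [hrP] at this
    have e2 : Q (sY c) j = 0 := by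
      have := hQ.2.2.2 rQ (sY c) hne2; rwa [hrQ] at this
    rw [e1, e2, sub_self]
end

section
/- Let X be a k1-dimensional and Y a k2-dimensional subspace of F_q^n. Then the subspace distance satisfies d_S(X,Y) = d_H(v(X), v(Y)) + 2·rank(X̃_μ − Ỹ_μ), where d_H denotes Hamming distance. -/
/-!
Restricting to the coordinates in `μ = μ(X,Y)` identifies `X ∩ Y` with the left kernel of
`X̃_μ - Ỹ_μ`, so `dim (X ∩ Y) = |μ| - rank (X̃_μ - Ỹ_μ)`; since
`dim X + dim Y = d_H(v(X), v(Y)) + 2 |μ|`, this is the formula.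

The restriction is injective: a vector of `X ∩ Y` vanishing on `μ` is a combination of rows of
`RE(X)` with pivots outside `v(Y)` and also of rows of `RE(Y)` with pivots outside `v(X)`, so
its leading index would be a pivot of both. For the image, the key fact is that a vector in the
row space of `RE(X) * Y_{μ^C}` that vanishes on `μ` also lies in the row space of
`RE(Y) * X_{μ^C}`: write it as `x + w` with `x ∈ X` and `w` a combination of rows of `Y_{μ^C}`;
then `w`, hence `x`, vanishes on `μ`, so `x` is a combination of rows of `X_{μ^C}`. In particular
every pivot of one of the two reduced matrices off `μ` is a pivot of the other.
-/

open Finset Module Submodule Matrix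

def IsLeadingIndex {ι F : Type*} [LinearOrder ι] [Zero F] (v : ι → F) (c : ι) : Prop :=
  v c ≠ 0 ∧ ∀ j < c, v j = 0

theorem exists_isLeadingIndex {ι F : Type*} [LinearOrder ι] [Fintype ι] [Zero F] {v : ι → F}
    (hv : v ≠ 0) : ∃ c, IsLeadingIndex v c := by
  classical
  have hne : ({j | v j ≠ 0} : Finset ι).Nonempty := by
    by_contra h
    exact hv (funext fun j => by_contra fun hj => h ⟨j, by simpa using hj⟩)
  refine ⟨_, (Finset.mem_filter.1 (Finset.min'_mem _ hne)).2, fun j hj => ?_⟩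
  by_contra hj0
  exact (Finset.min'_le _ j (Finset.mem_filter.2 ⟨Finset.mem_univ j, hj0⟩)).not_gt hj

theorem idVec_eq_true_iff {k n : ℕ} {piv : Fin k → Fin n} {c : Fin n} :
    idVec piv c = true ↔ c ∈ Set.range piv := by
  simp [idVec]

theorem idVec_eq_false_iff {k n : ℕ} {piv : Fin k → Fin n} {c : Fin n} :
    idVec piv c = false ↔ c ∉ Set.range piv := by
  simp [idVec]

theorem card_filter_idVec {k n : ℕ} {piv : Fin k → Fin n} (hpiv : Function.Injective piv) :
    #{c | idVec piv c = true} = k := by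
  have : ({c | idVec piv c = true} : Finset (Fin n)) = Finset.univ.image piv := by
    ext c; simp [idVec_eq_true_iff]
  rw [this, Finset.card_image_of_injective _ hpiv, card_univ, Fintype.card_fin]

theorem hammingDist_add_two_mul_card_filter_and {ι : Type*} [Fintype ι] (x y : ι → Bool) :
    hammingDist x y + 2 * #{i | x i = true ∧ y i = true} =
      #{i | x i = true} + #{i | y i = true} := by
  simp only [hammingDist, card_filter, mul_sum, ← sum_add_distrib]
  refine sum_congr rfl fun i _ => ?_
  cases x i <;> cases y i <;> rfl

theorem span_range_fromRows {R : Type*} [Semiring R] {m₁ m₂ ι : Type*}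
    (A : Matrix m₁ ι R) (B : Matrix m₂ ι R) :
    span R (Set.range (fromRows A B)) = span R (Set.range A) ⊔ span R (Set.range B) := by
  rw [← span_union, ← Set.Sum.elim_range (A : m₁ → ι → R) B]
  rfl

theorem vecMul_submatrix_mem_span_range {R : Type*} [Semiring R] {m ι κ : Type*} [Fintype ι]
    (M : Matrix m κ R) (s : ι → m) (f : ι → R) :
    f ᵥ* M.submatrix s id ∈ span R (Set.range M) := by
  have : f ᵥ* M.submatrix s id ∈ LinearMap.range (M.submatrix s id).vecMulLinear := ⟨f, rfl⟩
  rw [range_vecMulLinear] at this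
  exact span_mono (Set.range_comp_subset_range s M) this

namespace IsRREFWithPivots

variable {F : Type*} [Field F] {k n : ℕ} {M : Matrix (Fin k) (Fin n) F} {piv : Fin k → Fin n}

theorem apply_pivot (h : IsRREFWithPivots M piv) (i j : Fin k) :
    M i (piv j) = if i = j then 1 else 0 := by
  split_ifs with hij
  · exact hij ▸ h.2.1 i
  · exact h.2.2.2 j i hij

theorem isLeadingIndex_row (h : IsRREFWithPivots M piv) (i : Fin k) :
    IsLeadingIndex (M i) (piv i) :=
  ⟨by simp [h.2.1 i], h.2.2.1 i⟩

theorem sum_smul_apply_pivot (h : IsRREFWithPivots M piv) (f : Fin k → F) (j : Fin k) :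
    (∑ i, f i • M i) (piv j) = f j := by
  simp [Finset.sum_apply, h.apply_pivot]

theorem sum_smul_eq_of_mem_span (h : IsRREFWithPivots M piv) {v : Fin n → F}
    (hv : v ∈ span F (Set.range M)) : ∑ i, v (piv i) • M i = v := by
  obtain ⟨f, rfl⟩ := (mem_span_range_iff_exists_fun F).1 hv
  simp_rw [h.sum_smul_apply_pivot]

theorem eq_zero_of_mem_span_of_apply_pivot_eq_zero (h : IsRREFWithPivots M piv)
    {v : Fin n → F} (hv : v ∈ span F (Set.range M)) (h0 : ∀ i, v (piv i) = 0) : v = 0 := by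
  rw [← h.sum_smul_eq_of_mem_span hv]
  simp [h0]

theorem linearIndependent (h : IsRREFWithPivots M piv) : LinearIndependent F M :=
  Fintype.linearIndependent_iff.2 fun f hf i => by
    simpa using (h.sum_smul_apply_pivot f i).symm.trans (congrFun hf (piv i))

theorem finrank_span_range (h : IsRREFWithPivots M piv) :
    finrank F (span F (Set.range M)) = k := by
  rw [finrank_span_eq_card h.linearIndependent, Fintype.card_fin]

theorem apply_pivot_eq_zero_of_mem_span_image (h : IsRREFWithPivots M piv) {s : Set (Fin k)}
    {v : Fin n → F} (hv : v ∈ span F (M '' s)) {i : Fin k} (hi : i ∉ s) : v (piv i) = 0 := by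
  have hle : span F (M '' s) ≤ LinearMap.ker (LinearMap.proj (φ := fun _ => F) (piv i)) :=
    span_le.2 <| by
      rintro _ ⟨j, hj, rfl⟩
      exact h.2.2.2 i j (ne_of_mem_of_not_mem hj hi)
  exact hle hv

theorem mem_span_image_of_apply_pivot_eq_zero (h : IsRREFWithPivots M piv) {s : Set (Fin k)}
    {v : Fin n → F} (hv : v ∈ span F (Set.range M)) (h0 : ∀ i ∉ s, v (piv i) = 0) :
    v ∈ span F (M '' s) := by
  rw [← h.sum_smul_eq_of_mem_span hv]
  refine sum_mem fun i _ => ?_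
  by_cases hi : i ∈ s
  · exact smul_mem _ _ (subset_span (Set.mem_image_of_mem M hi))
  · simp [h0 i hi]

theorem exists_pivot_eq_of_isLeadingIndex (h : IsRREFWithPivots M piv) {v : Fin n → F}
    (hv : v ∈ span F (Set.range M)) {c : Fin n} (hc : IsLeadingIndex v c) : ∃ i, piv i = c := by
  have hvc := hc.1
  rw [← h.sum_smul_eq_of_mem_span hv, Finset.sum_apply] at hvc
  obtain ⟨i, -, hi⟩ := exists_ne_zero_of_sum_ne_zero hvc
  rw [Pi.smul_apply, smul_eq_mul, mul_ne_zero_iff] at hi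
  refine ⟨i, le_antisymm ?_ ?_⟩
  · exact not_lt.1 fun hlt => hi.2 (h.2.2.1 i c hlt)
  · exact not_lt.1 fun hlt => hi.1 (hc.2 _ hlt)

theorem eq_zero_of_mem_span_image_of_mem_span_image {k' : ℕ} {M' : Matrix (Fin k') (Fin n) F}
    {piv' : Fin k' → Fin n} (h : IsRREFWithPivots M piv) (h' : IsRREFWithPivots M' piv')
    {s : Set (Fin k)} {s' : Set (Fin k')} (hdisj : ∀ i ∈ s, ∀ j ∈ s', piv i ≠ piv' j)
    {v : Fin n → F} (hv : v ∈ span F (M '' s)) (hv' : v ∈ span F (M' '' s')) : v = 0 := by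
  by_contra hv0
  obtain ⟨c, hc⟩ := exists_isLeadingIndex hv0
  obtain ⟨i, rfl⟩ :=
    h.exists_pivot_eq_of_isLeadingIndex (span_mono (Set.image_subset_range _ _) hv) hc
  obtain ⟨j, hj⟩ :=
    h'.exists_pivot_eq_of_isLeadingIndex (span_mono (Set.image_subset_range _ _) hv') hc
  have hi : i ∈ s := by_contra fun hi => hc.1 (h.apply_pivot_eq_zero_of_mem_span_image hv hi)
  have hj' : j ∈ s' := by_contra fun hj' =>
    hc.1 (hj ▸ h'.apply_pivot_eq_zero_of_mem_span_image hv' hj')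
  exact hdisj i hi j hj' hj.symm

theorem vecMul_submatrix_apply_val {p : Fin n → Prop} [DecidablePred p]
    (h : IsRREFWithPivots M piv)
    {s : Subtype p → Fin k} (hs : ∀ c, piv (s c) = c) (f : Subtype p → F) (c : Subtype p) :
    (f ᵥ* M.submatrix s id) c = f c := by
  have hsinj : Function.Injective s := fun c c' hcc' =>
    Subtype.ext (by rw [← hs c, ← hs c', hcc'])
  simp only [← hs c, vecMul, dotProduct, submatrix_apply, id, h.apply_pivot, mul_ite, mul_one,
    mul_zero]
  rw [Fintype.sum_eq_single c fun c' hc' => if_neg (hsinj.ne hc'), if_pos rfl]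

theorem vecMul_submatrix_apply_pivot_of_notMem {ι : Type*} [Fintype ι]
    (h : IsRREFWithPivots M piv) {s : ι → Fin k} (f : ι → F) {r : Fin k}
    (hr : r ∉ Set.range s) :
    (f ᵥ* M.submatrix s id) (piv r) = 0 := by
  simp only [vecMul, dotProduct, submatrix_apply, id, h.apply_pivot]
  exact sum_eq_zero fun i _ => by rw [if_neg fun hi => hr ⟨i, hi⟩, mul_zero]

end IsRREFWithPivots

/-- The index set `μ(X,Y)`. -/
abbrev CommonPivot {k1 k2 n : ℕ} (pivX : Fin k1 → Fin n) (pivY : Fin k2 → Fin n) : Type :=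
  {c : Fin n // idVec pivX c = true ∧ idVec pivY c = true}

/-- The row space of `RE(X) * Y_{μ^C}`. -/
def augmentedSpan {F : Type*} [Field F] {k1 k2 n : ℕ} (MX : Matrix (Fin k1) (Fin n) F)
    (pivX : Fin k1 → Fin n) (MY : Matrix (Fin k2) (Fin n) F) (pivY : Fin k2 → Fin n) :
    Submodule F (Fin n → F) :=
  span F (Set.range MX) ⊔ span F (MY '' {j | pivY j ∉ Set.range pivX})

theorem span_range_fromRows_eq_augmentedSpan {F : Type*} [Field F] {k1 k2 n : ℕ}
    (MX : Matrix (Fin k1) (Fin n) F) (pivX : Fin k1 → Fin n) (MY : Matrix (Fin k2) (Fin n) F)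
    (pivY : Fin k2 → Fin n) :
    span F (Set.range (fromRows MX
      (of fun (i : {i : Fin k2 // idVec pivX (pivY i) = false}) j => MY i.1 j))) =
      augmentedSpan MX pivX MY pivY := by
  rw [span_range_fromRows, augmentedSpan]
  congr 2
  ext v
  constructor
  · rintro ⟨⟨j, hj⟩, rfl⟩
    exact ⟨j, idVec_eq_false_iff.1 hj, rfl⟩
  · rintro ⟨j, hj, rfl⟩
    exact ⟨⟨j, idVec_eq_false_iff.2 hj⟩, rfl⟩

section CommonPivots

variable {F : Type*} [Field F] {n k1 k2 rX rY : ℕ}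
  {MX : Matrix (Fin k1) (Fin n) F} {pivX : Fin k1 → Fin n}
  {MY : Matrix (Fin k2) (Fin n) F} {pivY : Fin k2 → Fin n}
  {P : Matrix (Fin rX) (Fin n) F} {pivP : Fin rX → Fin n}
  {Q : Matrix (Fin rY) (Fin n) F} {pivQ : Fin rY → Fin n}

theorem mem_augmentedSpan_swap (hMX : IsRREFWithPivots MX pivX) (hMY : IsRREFWithPivots MY pivY)
    {u : Fin n → F} (hu : u ∈ augmentedSpan MX pivX MY pivY)
    (h0 : ∀ c ∈ Set.range pivX, c ∈ Set.range pivY → u c = 0) :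
    u ∈ augmentedSpan MY pivY MX pivX := by
  obtain ⟨x, hx, w, hw, rfl⟩ := mem_sup.1 hu
  have hw0 : ∀ c ∈ Set.range pivX, c ∈ Set.range pivY → w c = 0 := by
    rintro c hcX ⟨j, rfl⟩
    exact hMY.apply_pivot_eq_zero_of_mem_span_image hw (not_not.2 hcX)
  have hx' : x ∈ span F (MX '' {i | pivX i ∉ Set.range pivY}) :=
    hMX.mem_span_image_of_apply_pivot_eq_zero hx fun i hi => by
      have hi : pivX i ∈ Set.range pivY := not_not.1 hi
      simpa [hw0 _ ⟨i, rfl⟩ hi] using h0 _ ⟨i, rfl⟩ hi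
  rw [add_comm]
  exact add_mem_sup (span_mono (Set.image_subset_range _ _) hw) hx'

theorem eq_zero_of_mem_inf_of_apply_eq_zero (hMX : IsRREFWithPivots MX pivX)
    (hMY : IsRREFWithPivots MY pivY) {v : Fin n → F}
    (hv : v ∈ span F (Set.range MX) ⊓ span F (Set.range MY))
    (h0 : ∀ c ∈ Set.range pivX, c ∈ Set.range pivY → v c = 0) : v = 0 := by
  refine hMX.eq_zero_of_mem_span_image_of_mem_span_image hMY
    (s := {i | pivX i ∉ Set.range pivY}) (s' := {j | pivY j ∉ Set.range pivX}) ?_ ?_ ?_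
  · rintro i hi j - hij
    exact hi ⟨j, hij.symm⟩
  · exact hMX.mem_span_image_of_apply_pivot_eq_zero hv.1 fun i hi =>
      h0 _ ⟨i, rfl⟩ (not_not.1 hi)
  · exact hMY.mem_span_image_of_apply_pivot_eq_zero hv.2 fun j hj =>
      h0 _ (not_not.1 hj) ⟨j, rfl⟩

theorem range_subset_range_of_augmentedSpan (hMX : IsRREFWithPivots MX pivX)
    (hMY : IsRREFWithPivots MY pivY) (hP : IsRREFWithPivots P pivP)
    (hQ : IsRREFWithPivots Q pivQ) (hPspan : span F (Set.range P) = augmentedSpan MX pivX MY pivY)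
    (hQspan : span F (Set.range Q) = augmentedSpan MY pivY MX pivX)
    {sX : CommonPivot pivX pivY → Fin rX} (hsX : ∀ c, pivP (sX c) = c)
    {sY : CommonPivot pivX pivY → Fin rY} (hsY : ∀ c, pivQ (sY c) = c) :
    Set.range pivQ ⊆ Set.range pivP := by
  rintro _ ⟨r, rfl⟩
  by_cases hr : idVec pivX (pivQ r) = true ∧ idVec pivY (pivQ r) = true
  · exact ⟨sX ⟨_, hr⟩, hsX _⟩
  have hQr : Q r ∈ span F (Set.range P) := by
    rw [hPspan]
    refine mem_augmentedSpan_swap hMY hMX (hQspan ▸ subset_span ⟨r, rfl⟩) fun c hcY hcX => ?_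
    have hc : idVec pivX c = true ∧ idVec pivY c = true :=
      ⟨idVec_eq_true_iff.2 hcX, idVec_eq_true_iff.2 hcY⟩
    rw [show c = pivQ (sY ⟨c, hc⟩) from (hsY ⟨c, hc⟩).symm]
    exact hQ.2.2.2 _ _ fun hrc => hr (by rw [hrc, hsY]; exact hc)
  exact hP.exists_pivot_eq_of_isLeadingIndex hQr (hQ.isLeadingIndex_row r)

theorem vecMul_submatrix_mem_span_of_mem_inf (hMX : IsRREFWithPivots MX pivX)
    (hMY : IsRREFWithPivots MY pivY) (hP : IsRREFWithPivots P pivP)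
    (hPspan : span F (Set.range P) = augmentedSpan MX pivX MY pivY)
    (hQspan : span F (Set.range Q) = augmentedSpan MY pivY MX pivX)
    {sX : CommonPivot pivX pivY → Fin rX} (hsX : ∀ c, pivP (sX c) = c) {v : Fin n → F}
    (hv : v ∈ span F (Set.range MX) ⊓ span F (Set.range MY)) :
    (fun c : CommonPivot pivX pivY => v c) ᵥ* P.submatrix sX id ∈ span F (Set.range Q) := by
  set p := (fun c : CommonPivot pivX pivY => v c) ᵥ* P.submatrix sX id
  have hvP : v ∈ span F (Set.range P) := hPspan ▸ mem_sup_left hv.1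
  have hvQ : v ∈ span F (Set.range Q) := hQspan ▸ mem_sup_left hv.2
  have hrest : v - p ∈ span F (Set.range Q) := by
    rw [hQspan]
    refine mem_augmentedSpan_swap hMX hMY
      (hPspan ▸ sub_mem hvP (vecMul_submatrix_mem_span_range P sX _)) fun c hcX hcY => ?_
    rw [Pi.sub_apply, sub_eq_zero]
    exact (hP.vecMul_submatrix_apply_val hsX (fun c => v c)
      ⟨c, idVec_eq_true_iff.2 hcX, idVec_eq_true_iff.2 hcY⟩).symm
  simpa using sub_mem hvQ hrest

theorem vecMul_submatrix_sub_eq_zero_of_mem_inf (hMX : IsRREFWithPivots MX pivX)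
    (hMY : IsRREFWithPivots MY pivY) (hP : IsRREFWithPivots P pivP)
    (hQ : IsRREFWithPivots Q pivQ) (hPspan : span F (Set.range P) = augmentedSpan MX pivX MY pivY)
    (hQspan : span F (Set.range Q) = augmentedSpan MY pivY MX pivX)
    {sX : CommonPivot pivX pivY → Fin rX} (hsX : ∀ c, pivP (sX c) = c)
    {sY : CommonPivot pivX pivY → Fin rY} (hsY : ∀ c, pivQ (sY c) = c) {v : Fin n → F}
    (hv : v ∈ span F (Set.range MX) ⊓ span F (Set.range MY)) :
    (fun c : CommonPivot pivX pivY => v c) ᵥ* (P.submatrix sX id - Q.submatrix sY id) = 0 := by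
  set f : CommonPivot pivX pivY → F := fun c => v c
  rw [vecMul_sub]
  refine hQ.eq_zero_of_mem_span_of_apply_pivot_eq_zero
    (sub_mem (vecMul_submatrix_mem_span_of_mem_inf hMX hMY hP hPspan hQspan hsX hv)
      (vecMul_submatrix_mem_span_range Q sY f)) fun r => ?_
  by_cases hr : r ∈ Set.range sY
  · obtain ⟨c, rfl⟩ := hr
    rw [Pi.sub_apply, hsY, hP.vecMul_submatrix_apply_val hsX, hQ.vecMul_submatrix_apply_val hsY,
      sub_self]
  obtain ⟨r', hr'⟩ := range_subset_range_of_augmentedSpan hMX hMY hP hQ hPspan hQspan hsX hsY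
    ⟨r, rfl⟩
  have hr'X : r' ∉ Set.range sX := by
    rintro ⟨c, rfl⟩
    exact hr ⟨c, hQ.1.injective (by rw [hsY, ← hr', hsX])⟩
  rw [Pi.sub_apply, ← hr', hP.vecMul_submatrix_apply_pivot_of_notMem f hr'X, hr',
    hQ.vecMul_submatrix_apply_pivot_of_notMem f hr, sub_zero]

theorem exists_mem_inf_of_vecMul_submatrix_sub_eq_zero (hMX : IsRREFWithPivots MX pivX)
    (hMY : IsRREFWithPivots MY pivY) (hP : IsRREFWithPivots P pivP)
    (hPspan : span F (Set.range P) = augmentedSpan MX pivX MY pivY)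
    (hQspan : span F (Set.range Q) = augmentedSpan MY pivY MX pivX)
    {sX : CommonPivot pivX pivY → Fin rX} (hsX : ∀ c, pivP (sX c) = c)
    {sY : CommonPivot pivX pivY → Fin rY} {f : CommonPivot pivX pivY → F}
    (hf : f ᵥ* (P.submatrix sX id - Q.submatrix sY id) = 0) :
    ∃ v ∈ span F (Set.range MX) ⊓ span F (Set.range MY),
      ∀ c : CommonPivot pivX pivY, v c = f c := by
  set u := f ᵥ* P.submatrix sX id
  have huQ : f ᵥ* Q.submatrix sY id = u := (sub_eq_zero.1 (by rwa [vecMul_sub] at hf)).symm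
  obtain ⟨x, hx, w, hw, hxw⟩ := mem_sup.1 (hPspan ▸ vecMul_submatrix_mem_span_range P sX f)
  obtain ⟨y, hy, w', hw', hyw'⟩ :=
    mem_sup.1 (hQspan ▸ huQ ▸ vecMul_submatrix_mem_span_range Q sY f)
  have hxy : x - w' = y - w := by
    rw [eq_sub_of_add_eq hxw, eq_sub_of_add_eq hyw']
    abel
  refine ⟨x - w', ⟨sub_mem hx (span_mono (Set.image_subset_range _ _) hw'),
    hxy ▸ sub_mem hy (span_mono (Set.image_subset_range _ _) hw)⟩, fun c => ?_⟩
  obtain ⟨⟨i, hi⟩, ⟨j, hj⟩⟩ := And.imp idVec_eq_true_iff.1 idVec_eq_true_iff.1 c.2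
  have hw'c : w' c = 0 :=
    hi ▸ hMX.apply_pivot_eq_zero_of_mem_span_image hw' (not_not.2 (hi ▸ ⟨j, hj⟩))
  have hwc : w c = 0 :=
    hj ▸ hMY.apply_pivot_eq_zero_of_mem_span_image hw (not_not.2 (hj ▸ ⟨i, hi⟩))
  rw [Pi.sub_apply, hw'c, sub_zero, eq_sub_of_add_eq hxw, Pi.sub_apply, hwc, sub_zero,
    hP.vecMul_submatrix_apply_val hsX]

theorem finrank_inf_add_rank_eq_card (hMX : IsRREFWithPivots MX pivX)
    (hMY : IsRREFWithPivots MY pivY) (hP : IsRREFWithPivots P pivP)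
    (hQ : IsRREFWithPivots Q pivQ) (hPspan : span F (Set.range P) = augmentedSpan MX pivX MY pivY)
    (hQspan : span F (Set.range Q) = augmentedSpan MY pivY MX pivX)
    {sX : CommonPivot pivX pivY → Fin rX} (hsX : ∀ c, pivP (sX c) = c)
    {sY : CommonPivot pivX pivY → Fin rY} (hsY : ∀ c, pivQ (sY c) = c) :
    finrank F ↥(span F (Set.range MX) ⊓ span F (Set.range MY)) +
      (P.submatrix sX id - Q.submatrix sY id).rank = Fintype.card (CommonPivot pivX pivY) := by
  let ρ :
      ↥(span F (Set.range MX) ⊓ span F (Set.range MY)) →ₗ[F] CommonPivot pivX pivY → F :=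
    LinearMap.funLeft F F Subtype.val ∘ₗ Submodule.subtype _
  have hρ : Function.Injective ρ := (injective_iff_map_eq_zero ρ).2 fun v hv =>
    Subtype.ext <| eq_zero_of_mem_inf_of_apply_eq_zero hMX hMY v.2 fun c hcX hcY =>
      congrFun hv ⟨c, idVec_eq_true_iff.2 hcX, idVec_eq_true_iff.2 hcY⟩
  have hrange :
      LinearMap.range ρ = LinearMap.ker (P.submatrix sX id - Q.submatrix sY id).vecMulLinear := by
    refine le_antisymm ?_ fun f hf => ?_
    · rintro _ ⟨v, rfl⟩
      exact vecMul_submatrix_sub_eq_zero_of_mem_inf hMX hMY hP hQ hPspan hQspan hsX hsY v.2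
    · obtain ⟨v, hv, hvf⟩ :=
        exists_mem_inf_of_vecMul_submatrix_sub_eq_zero hMX hMY hP hPspan hQspan hsX hf
      exact ⟨⟨v, hv⟩, funext hvf⟩
  rw [← LinearMap.finrank_range_of_inj hρ, hrange, rank_eq_finrank_span_row,
    ← range_vecMulLinear, add_comm, LinearMap.finrank_range_add_finrank_ker,
    finrank_fintype_fun_eq_card]

end CommonPivots

/-- Here `MX = RE(X)`, `MY = RE(Y)`, `P = RE(RE(X) * Y_{μ^C})` and `Q = RE(RE(Y) * X_{μ^C})`;
the row of `X̃_μ` (resp. `Ỹ_μ`) with leading one in column `c ∈ μ(X,Y)` is row `sX c` of `P`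
(resp. row `sY c` of `Q`). -/
theorem subDist_eq_hamming_add_rank_general {F : Type*} [Field F] {n k1 k2 : ℕ}
    (X Y : Submodule F (Fin n → F))
    (MX : Matrix (Fin k1) (Fin n) F) (pivX : Fin k1 → Fin n)
    (hMX : IsRREFWithPivots MX pivX)
    (hsX : Submodule.span F (Set.range MX) = X)
    (MY : Matrix (Fin k2) (Fin n) F) (pivY : Fin k2 → Fin n)
    (hMY : IsRREFWithPivots MY pivY)
    (hsY : Submodule.span F (Set.range MY) = Y)
    {rX rY : ℕ}
    (P : Matrix (Fin rX) (Fin n) F) (pivP : Fin rX → Fin n)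
    (hP : IsRREFWithPivots P pivP)
    (hPspan : Submodule.span F (Set.range P) =
      Submodule.span F (Set.range (Matrix.fromRows MX
        (Matrix.of fun (i : {i : Fin k2 // idVec pivX (pivY i) = false}) j => MY i.1 j))))
    (Q : Matrix (Fin rY) (Fin n) F) (pivQ : Fin rY → Fin n)
    (hQ : IsRREFWithPivots Q pivQ)
    (hQspan : Submodule.span F (Set.range Q) =
      Submodule.span F (Set.range (Matrix.fromRows MY
        (Matrix.of fun (i : {i : Fin k1 // idVec pivY (pivX i) = false}) j => MX i.1 j))))
    (sX : {c : Fin n // idVec pivX c = true ∧ idVec pivY c = true} → Fin rX)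
    (hsXsel : ∀ c, pivP (sX c) = c.1)
    (sY : {c : Fin n // idVec pivX c = true ∧ idVec pivY c = true} → Fin rY)
    (hsYsel : ∀ c, pivQ (sY c) = c.1) :
    subDist X Y =
      hammingDist (idVec pivX) (idVec pivY) +
        2 * (Matrix.of fun (c : {c : Fin n // idVec pivX c = true ∧ idVec pivY c = true})
              (j : Fin n) => P (sX c) j - Q (sY c) j).rank := by
  subst hsX hsY
  have hrank := finrank_inf_add_rank_eq_card hMX hMY hP hQ
    (hPspan.trans (span_range_fromRows_eq_augmentedSpan MX pivX MY pivY))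
    (hQspan.trans (span_range_fromRows_eq_augmentedSpan MY pivY MX pivX)) hsXsel hsYsel
  have hcount :
      hammingDist (idVec pivX) (idVec pivY) + 2 * Fintype.card (CommonPivot pivX pivY) =
        k1 + k2 := by
    have h := hammingDist_add_two_mul_card_filter_and (idVec pivX) (idVec pivY)
    rwa [card_filter_idVec hMX.1.injective, card_filter_idVec hMY.1.injective,
      ← Fintype.card_subtype] at h
  rw [subDist, hMX.finrank_span_range, hMY.finrank_span_range]
  change _ = _ + 2 * (P.submatrix sX id - Q.submatrix sY id).rank
  omega

/-- **Theorem 1 of the paper.**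
`d_S(X,Y) = d_H(v(X), v(Y)) + 2 rank(X̃_μ - Ỹ_μ)`.

Here `MX = RE(X)`, `MY = RE(Y)` (with pivot functions `pivX`, `pivY`),
`P = RE(RE(X) * Y_{μ^C})` and `Q = RE(RE(Y) * X_{μ^C})` (with pivot functions
`pivP`, `pivQ`), and `X̃_μ` (resp. `Ỹ_μ`) is the submatrix of `P` (resp. `Q`)
consisting of the rows whose leading ones are in the columns indexed by
`μ(X,Y)`; its row with leading one in column `c ∈ μ(X,Y)` is row `sX c` of `P`
(resp. row `sY c` of `Q`). -/
theorem subDist_eq_hamming_add_rank {F : Type*} [Field F] [Fintype F] {n k1 k2 : ℕ}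
    (X Y : Submodule F (Fin n → F))
    (MX : Matrix (Fin k1) (Fin n) F) (pivX : Fin k1 → Fin n)
    (hMX : IsRREFWithPivots MX pivX)
    (hsX : Submodule.span F (Set.range MX) = X)
    (MY : Matrix (Fin k2) (Fin n) F) (pivY : Fin k2 → Fin n)
    (hMY : IsRREFWithPivots MY pivY)
    (hsY : Submodule.span F (Set.range MY) = Y)
    {rX rY : ℕ}
    (P : Matrix (Fin rX) (Fin n) F) (pivP : Fin rX → Fin n)
    (hP : IsRREFWithPivots P pivP)
    (hPspan : Submodule.span F (Set.range P) =
      Submodule.span F (Set.range (Matrix.fromRows MX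
        (Matrix.of fun (i : {i : Fin k2 // idVec pivX (pivY i) = false}) j => MY i.1 j))))
    (Q : Matrix (Fin rY) (Fin n) F) (pivQ : Fin rY → Fin n)
    (hQ : IsRREFWithPivots Q pivQ)
    (hQspan : Submodule.span F (Set.range Q) =
      Submodule.span F (Set.range (Matrix.fromRows MY
        (Matrix.of fun (i : {i : Fin k1 // idVec pivY (pivX i) = false}) j => MX i.1 j))))
    (sX : {c : Fin n // idVec pivX c = true ∧ idVec pivY c = true} → Fin rX)
    (hsXsel : ∀ c, pivP (sX c) = c.1)
    (sY : {c : Fin n // idVec pivX c = true ∧ idVec pivY c = true} → Fin rY)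
    (hsYsel : ∀ c, pivQ (sY c) = c.1) :
    subDist X Y =
      hammingDist (idVec pivX) (idVec pivY) +
        2 * (Matrix.of fun (c : {c : Fin n // idVec pivX c = true ∧ idVec pivY c = true})
              (j : Fin n) => P (sX c) j - Q (sY c) j).rank :=
  subDist_eq_hamming_add_rank_general X Y MX pivX hMX hsX MY pivY hMY hsY P pivP hP hPspan Q pivQ hQ
    hQspan sX hsXsel sY hsYsel
end

section
/- Let X and Y be two k-dimensional subspaces of F_q^n with the same identifying vector, v(X) = v(Y). Then d_S(X,Y) = 2·rank(RE(X) − RE(Y)). -/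
/-!
Equal identifying vectors force equal pivot columns `p`, and then reading a vector off at the
pivots, `v ↦ v ∘ p`, recovers its coefficients with respect to the rows of either `RE(X)` or
`RE(Y)`. Hence `a ᵥ* RE(X)` lies in `Y` exactly when `a ᵥ* RE(X) = a ᵥ* RE(Y)`, so `X ∩ Y` is
the image of the left kernel of `RE(X) - RE(Y)`, and rank–nullity gives
`dim (X ∩ Y) = k - rank (RE(X) - RE(Y))`.
-/

namespace LinearMap

theorem range_inf_range_eq_map_ker_sub {R M N : Type*} [Ring R] [AddCommGroup M] [Module R M]
    [AddCommGroup N] [Module R N] {f g : M →ₗ[R] N} {l : N →ₗ[R] M}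
    (hf : l ∘ₗ f = id) (hg : l ∘ₗ g = id) :
    range f ⊓ range g = (ker (f - g)).map f := by
  apply le_antisymm
  · rintro v ⟨⟨a, rfl⟩, ⟨b, hb⟩⟩
    have hba : b = a := by
      simpa only [← comp_apply, hf, hg, id_apply] using congrArg l hb
    subst hba
    exact ⟨b, by simp [hb], rfl⟩
  · rintro _ ⟨a, ha, rfl⟩
    rw [SetLike.mem_coe, mem_ker, sub_apply, sub_eq_zero] at ha
    exact ⟨⟨a, rfl⟩, ⟨a, ha.symm⟩⟩

theorem finrank_range_inf_range_add_finrank_range_sub {K V W : Type*} [Field K]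
    [AddCommGroup V] [Module K V] [FiniteDimensional K V] [AddCommGroup W] [Module K W]
    {f g : V →ₗ[K] W} {l : W →ₗ[K] V} (hf : l ∘ₗ f = id) (hg : l ∘ₗ g = id) :
    Module.finrank K ↥(range f ⊓ range g) + Module.finrank K (range (f - g)) =
      Module.finrank K V := by
  rw [range_inf_range_eq_map_ker_sub hf hg, ← (Submodule.equivMapOfInjective f
    (injective_of_comp_eq_id f l hf) _).finrank_eq, add_comm]
  exact finrank_range_add_finrank_ker (f - g)

end LinearMap

theorem Matrix.vecMulLinear_sub {R m n : Type*} [Ring R] [Fintype m] (A B : Matrix m n R) :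
    (A - B).vecMulLinear = A.vecMulLinear - B.vecMulLinear :=
  LinearMap.ext fun a => Matrix.vecMul_sub A B a

theorem Matrix.rank_eq_finrank_range_vecMulLinear {R m n : Type*} [Field R] [Fintype m]
    [Fintype n] (A : Matrix m n R) :
    A.rank = Module.finrank R (LinearMap.range A.vecMulLinear) := by
  rw [Matrix.rank_eq_finrank_span_row, range_vecMulLinear]

theorem idVec_eq_idVec_iff {k n : ℕ} {p q : Fin k → Fin n} :
    idVec p = idVec q ↔ Set.range p = Set.range q := by
  simp only [funext_iff, idVec, decide_eq_decide, Set.ext_iff, Set.mem_range]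

namespace IsRREFWithPivots

variable {F : Type*} [Field F] {k n : ℕ} {M : Matrix (Fin k) (Fin n) F} {piv : Fin k → Fin n}

theorem vecMul_apply_pivot (hM : IsRREFWithPivots M piv) (a : Fin k → F) (i : Fin k) :
    Matrix.vecMul a M (piv i) = a i := by
  obtain ⟨-, hone, -, hzero⟩ := hM
  rw [Matrix.vecMul, dotProduct, Finset.sum_eq_single i
    (fun j _ hj => by rw [hzero i j hj, mul_zero]) (absurd (Finset.mem_univ i)), hone, mul_one]

theorem funLeft_comp_vecMulLinear (hM : IsRREFWithPivots M piv) :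
    LinearMap.funLeft F F piv ∘ₗ M.vecMulLinear = LinearMap.id :=
  LinearMap.ext fun a => funext (hM.vecMul_apply_pivot a)

theorem finrank_range_vecMulLinear (hM : IsRREFWithPivots M piv) :
    Module.finrank F (LinearMap.range M.vecMulLinear) = k := by
  rw [LinearMap.finrank_range_of_inj (LinearMap.injective_of_comp_eq_id _ _
    hM.funLeft_comp_vecMulLinear), Module.finrank_fin_fun]

theorem pivots_eq_of_idVec_eq {M' : Matrix (Fin k) (Fin n) F} {piv' : Fin k → Fin n}
    (hM : IsRREFWithPivots M piv) (hM' : IsRREFWithPivots M' piv')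
    (hid : idVec piv = idVec piv') : piv = piv' :=
  (hM.1.range_inj hM'.1).mp (idVec_eq_idVec_iff.mp hid)

end IsRREFWithPivots

theorem subDist_eq_two_rank_sub_general {F : Type*} [Field F] {n k : ℕ}
    (X Y : Submodule F (Fin n → F))
    (MX : Matrix (Fin k) (Fin n) F) (pivX : Fin k → Fin n)
    (hMX : IsRREFWithPivots MX pivX)
    (hsX : Submodule.span F (Set.range MX) = X)
    (MY : Matrix (Fin k) (Fin n) F) (pivY : Fin k → Fin n)
    (hMY : IsRREFWithPivots MY pivY)
    (hsY : Submodule.span F (Set.range MY) = Y)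
    (hid : idVec pivX = idVec pivY) :
    subDist X Y = 2 * (MX - MY).rank := by
  obtain rfl := hMX.pivots_eq_of_idVec_eq hMY hid
  obtain rfl : LinearMap.range MX.vecMulLinear = X := (range_vecMulLinear MX).trans hsX
  obtain rfl : LinearMap.range MY.vecMulLinear = Y := (range_vecMulLinear MY).trans hsY
  have hdim := LinearMap.finrank_range_inf_range_add_finrank_range_sub
    hMX.funLeft_comp_vecMulLinear hMY.funLeft_comp_vecMulLinear
  rw [← Matrix.vecMulLinear_sub, ← Matrix.rank_eq_finrank_range_vecMulLinear,
    Module.finrank_fin_fun] at hdim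
  rw [subDist, hMX.finrank_range_vecMulLinear, hMY.finrank_range_vecMulLinear]
  omega

/-- **Corollary 3 of the paper.** If `X` and `Y` are
`k`-dimensional subspaces of `F_q^n` with the same identifying vector, then
`d_S(X,Y) = 2 rank(RE(X) - RE(Y))`. -/
theorem subDist_eq_two_rank_sub {F : Type*} [Field F] [Fintype F] {n k : ℕ}
    (X Y : Submodule F (Fin n → F))
    (MX : Matrix (Fin k) (Fin n) F) (pivX : Fin k → Fin n)
    (hMX : IsRREFWithPivots MX pivX)
    (hsX : Submodule.span F (Set.range MX) = X)
    (MY : Matrix (Fin k) (Fin n) F) (pivY : Fin k → Fin n)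
    (hMY : IsRREFWithPivots MY pivY)
    (hsY : Submodule.span F (Set.range MY) = Y)
    (hid : idVec pivX = idVec pivY) :
    subDist X Y = 2 * (MX - MY).rank :=
  subDist_eq_two_rank_sub_general X Y MX pivX hMX hsX MY pivY hMY hsY hid
end

section
/- Let F be an m×η Ferrers diagram and let C be an [F, ϱ, δ] Ferrers diagram rank-metric code over F_q. For each i with 0 ≤ i ≤ δ−1, let ν_i be the number of dots of F that are not contained in the first i rows and not contained in the rightmost δ−1−i columns. Then ϱ ≤ min_{0 ≤ i ≤ δ−1} ν_i. -/
/-!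
A codeword that vanishes on the dots counted by `ν_i` has all its nonzero entries in the first `i`
rows or in the rightmost `δ - 1 - i` columns, so its rank is at most `δ - 1`; by the minimum
distance it is `0`. Hence reading off the entries at those `ν_i` positions is injective on the
code, and `ϱ ≤ ν_i`.
-/

open Finset

namespace Matrix

variable {F : Type*} [Field F] {m n : Type*} [Fintype n]

theorem rank_add_le (A B : Matrix m n F) : (A + B).rank ≤ A.rank + B.rank := by
  rw [rank, rank, rank, mulVecLin_add]
  have hle : LinearMap.range (A.mulVecLin + B.mulVecLin) ≤
      LinearMap.range A.mulVecLin ⊔ LinearMap.range B.mulVecLin := by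
    rintro _ ⟨x, rfl⟩
    exact Submodule.add_mem_sup ⟨x, rfl⟩ ⟨x, rfl⟩
  exact (Submodule.finrank_mono hle).trans (Submodule.finrank_add_le_finrank_add_finrank _ _)

variable [Fintype m]

theorem eq_zero_of_rank_eq_zero {A : Matrix m n F} (h : A.rank = 0) : A = 0 := by
  rw [rank_eq_finrank_span_cols, Submodule.finrank_eq_zero, Submodule.span_eq_bot] at h
  ext r c
  exact congr_fun (h _ ⟨c, rfl⟩) r

theorem rank_le_card_of_forall_notMem_col (A : Matrix m n F) (K : Finset n)
    (h : ∀ r, ∀ c ∉ K, A r c = 0) : A.rank ≤ #K := by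
  classical
  have hspan : Submodule.span F (Set.range A.col) ≤ Submodule.span F ↑(K.image A.col) := by
    refine Submodule.span_le.mpr ?_
    rintro _ ⟨c, rfl⟩
    by_cases hc : c ∈ K
    · exact Submodule.subset_span (mem_image_of_mem _ hc)
    · have : A.col c = 0 := funext fun r => h r c hc
      simp [this]
  calc A.rank ≤ (↑(K.image A.col) : Set (m → F)).finrank F :=
        (rank_eq_finrank_span_cols A).trans_le (Submodule.finrank_mono hspan)
    _ ≤ #(K.image A.col) := finrank_span_finset_le_card _
    _ ≤ #K := card_image_le

theorem rank_le_card_of_forall_notMem_row (A : Matrix m n F) (R : Finset m)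
    (h : ∀ r ∉ R, ∀ c, A r c = 0) : A.rank ≤ #R := by
  rw [← rank_transpose]
  exact rank_le_card_of_forall_notMem_col Aᵀ R fun c r hr => h r hr c

theorem rank_le_card_add_card (A : Matrix m n F) (R : Finset m) (K : Finset n)
    (h : ∀ r ∉ R, ∀ c ∉ K, A r c = 0) : A.rank ≤ #R + #K := by
  classical
  let A₁ : Matrix m n F := of fun r c => if r ∈ R then A r c else 0
  let A₂ : Matrix m n F := of fun r c => if r ∈ R then 0 else A r c
  have hsplit : A = A₁ + A₂ := by
    ext r c
    by_cases hr : r ∈ R <;> simp [A₁, A₂, hr]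
  have h₁ : A₁.rank ≤ #R := rank_le_card_of_forall_notMem_row A₁ R fun r hr c => by simp [A₁, hr]
  have h₂ : A₂.rank ≤ #K := rank_le_card_of_forall_notMem_col A₂ K fun r c hc => by
    by_cases hr : r ∈ R <;> simp [A₂, hr, h r _ c hc]
  rw [hsplit]
  exact (rank_add_le A₁ A₂).trans (add_le_add h₁ h₂)

end Matrix

section

variable {F : Type*} [Field F] {m n : Type*}

def Matrix.restrictEntries (S : Finset (m × n)) : Matrix m n F →ₗ[F] (S → F) :=
  LinearMap.pi fun p => Matrix.entryLinearMap F F p.1.1 p.1.2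

theorem Submodule.finrank_le_card_of_eq_zero_of_vanishes_on (C : Submodule F (Matrix m n F))
    (S : Finset (m × n)) (h : ∀ A ∈ C, (∀ p ∈ S, A p.1 p.2 = 0) → A = 0) :
    Module.finrank F C ≤ #S := by
  have hinj : Function.Injective ((Matrix.restrictEntries S).comp C.subtype) := by
    rw [← LinearMap.ker_eq_bot, Submodule.eq_bot_iff]
    rintro ⟨A, hA⟩ hker
    exact Subtype.ext (h A hA fun p hp => congr_fun hker ⟨p, hp⟩)
  simpa using LinearMap.finrank_le_finrank_of_injective hinj

theorem eq_zero_of_rank_le_pred [Fintype m] [Fintype n] {C : Submodule F (Matrix m n F)} {δ : ℕ}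
    (hdist : ∀ A ∈ C, ∀ B ∈ C, A ≠ B → δ ≤ (A - B).rank)
    {A : Matrix m n F} (hA : A ∈ C) (hrank : A.rank ≤ δ - 1) : A = 0 := by
  by_contra hne
  have hδ := hdist A hA 0 C.zero_mem hne
  rw [sub_zero] at hδ
  exact hne (Matrix.eq_zero_of_rank_eq_zero (by omega))

end

theorem Fin.card_filter_sub_le_val (n k : ℕ) : #{c : Fin n | n - k ≤ c} ≤ k := by
  have hcard := card_filter_add_card_filter_not (s := univ) (fun c : Fin n => n - k ≤ c)
  simp only [not_le, Fin.card_filter_val_lt, card_univ, Fintype.card_fin] at hcard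
  omega

/-- **Theorem 2 of the paper.** Let `Fd` be an `m × η` Ferrers
diagram (a set of dots which is right-justified in each row, with row sizes
weakly decreasing from top to bottom, whose rightmost column has `m` dots and
whose top row has `η` dots; rows are indexed from the top by `Fin m` and
columns from the left by `Fin η`). If `C` is an `[Fd, ϱ, δ]` Ferrers diagram
rank-metric code, then for every `i` with `0 ≤ i ≤ δ - 1`, `ϱ ≤ ν_i`, where
`ν_i` is the number of dots of `Fd` not contained in the first `i` rows nor in
the rightmost `δ - 1 - i` columns; i.e. `ϱ ≤ min_{0 ≤ i ≤ δ-1} ν_i`. -/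
theorem ferrers_rank_metric_bound {F : Type*} [Field F] {m η : ℕ}
    (Fd : Finset (Fin m × Fin η))
    (C : Submodule F (Matrix (Fin m) (Fin η) F)) (ϱ δ : ℕ)
    (hsupp : ∀ A ∈ C, ∀ p : Fin m × Fin η, p ∉ Fd → A p.1 p.2 = 0)
    (hdim : Module.finrank F C = ϱ)
    (hdist : ∀ A ∈ C, ∀ B ∈ C, A ≠ B → δ ≤ (A - B).rank) :
    ∀ i : ℕ, i ≤ δ - 1 →
      ϱ ≤ (Fd.filter fun p : Fin m × Fin η =>
            i ≤ (p.1 : ℕ) ∧ (p.2 : ℕ) < η - (δ - 1 - i)).card := by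
  intro i hi
  rw [← hdim]
  refine C.finrank_le_card_of_eq_zero_of_vanishes_on _ fun A hA hvanish => ?_
  refine eq_zero_of_rank_le_pred hdist hA ?_
  have hsupport : ∀ r ∉ ({r : Fin m | r < i} : Finset _),
      ∀ c ∉ ({c : Fin η | η - (δ - 1 - i) ≤ c} : Finset _), A r c = 0 := by
    intro r hr c hc
    simp only [mem_filter, mem_univ, true_and, not_lt, not_le] at hr hc
    by_cases hrc : (r, c) ∈ Fd
    · exact hvanish (r, c) (mem_filter.mpr ⟨hrc, hr, hc⟩)
    · exact hsupp A hA (r, c) hrc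
  calc A.rank ≤ #{r : Fin m | r < i} + #{c : Fin η | η - (δ - 1 - i) ≤ c} :=
        A.rank_le_card_add_card _ _ hsupport
    _ ≤ i + (δ - 1 - i) := by
        gcongr
        · exact Fin.card_filter_val_lt.trans_le (min_le_right _ _)
        · exact Fin.card_filter_sub_le_val η _
    _ = δ - 1 := by omega
end

section
/- Let 0 ≤ r ≤ k ≤ n. The number of r-dimensional subspaces X of F_q^n whose identifying vector v(X) is supported in the first k coordinates (i.e., supp(v(X)) ⊆ {1,...,k}) equals [k choose r]_q · q^{r(n−k)}, where [k choose r]_q is the Gaussian (q-) binomial coefficient. -/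
/-!
Call `j` a leading coordinate of a subspace `X ≤ F^n` if some vector of `X` has its first nonzero
entry at `j`. Restricting to the leading coordinates `P` is an isomorphism `X ≃ F^P`; its inverse
applied to the standard basis is the RREF generator matrix of `X`, and the pivots of any RREF
generator matrix are exactly `P`. So subspaces correspond to RREF matrices, and those with all
pivots among the first `k` columns are an RREF `r × k` matrix (the RREF of an `r`-dimensional
subspace of `F^k`) followed by an arbitrary `r × (n - k)` block.
-/

open Module Submodule

section LeadingCoords

variable {F ι : Type*} [Field F] [LinearOrder ι]

def IsLeadingCoord (x : ι → F) (j : ι) : Prop :=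
  x j ≠ 0 ∧ ∀ j' < j, x j' = 0

lemma exists_isLeadingCoord [WellFoundedLT ι] {x : ι → F} (hx : x ≠ 0) :
    ∃ j, IsLeadingCoord x j := by
  obtain ⟨j, hj, hmin⟩ := wellFounded_lt.has_min {j | x j ≠ 0} (Function.ne_iff.mp hx)
  exact ⟨j, hj, fun j' hj' => by_contra fun h => hmin j' h hj'⟩

def leadingCoords (X : Submodule F (ι → F)) : Set ι :=
  {j | ∃ x ∈ X, IsLeadingCoord x j}

def restrictLeadingCoords (X : Submodule F (ι → F)) : X →ₗ[F] (leadingCoords X → F) :=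
  (LinearMap.funLeft F F Subtype.val).comp X.subtype

lemma restrictLeadingCoords_injective [WellFoundedLT ι] (X : Submodule F (ι → F)) :
    Function.Injective (restrictLeadingCoords X) := by
  rw [← LinearMap.ker_eq_bot, LinearMap.ker_eq_bot']
  intro x hx
  by_contra hx0
  obtain ⟨j, hj⟩ := exists_isLeadingCoord (fun h => hx0 (Subtype.ext h))
  exact hj.1 (congrFun hx ⟨j, x, x.2, hj⟩)

lemma restrictLeadingCoords_surjective [Fintype ι] (X : Submodule F (ι → F)) :
    Function.Surjective (restrictLeadingCoords X) := by
  classical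
  -- vectors of `X` with distinct leading coordinates restrict to a triangular invertible matrix
  choose y hyX hy using fun j : leadingCoords X => j.2
  let N : Matrix (leadingCoords X) (leadingCoords X) F := fun j j' => y j j'
  have hN : N.IsUpperTriangular := fun j j' h => (hy j).2 _ h
  have hNdet : IsUnit N := by
    rw [Matrix.isUnit_iff_isUnit_det, Matrix.det_of_isUpperTriangular hN]
    exact (Finset.prod_ne_zero_iff.mpr fun j _ => (hy j).1).isUnit
  intro v
  obtain ⟨c, rfl⟩ := Matrix.vecMul_surjective_iff_isUnit.mpr hNdet v
  refine ⟨∑ j, c j • ⟨y j, hyX j⟩, ?_⟩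
  rw [map_sum]
  exact (Matrix.vecMul_eq_sum c N).symm

noncomputable def leadingCoordsEquiv [Fintype ι] (X : Submodule F (ι → F)) :
    X ≃ₗ[F] (leadingCoords X → F) :=
  LinearEquiv.ofBijective _
    ⟨restrictLeadingCoords_injective X, restrictLeadingCoords_surjective X⟩

lemma finrank_eq_ncard_leadingCoords [Fintype ι] (X : Submodule F (ι → F)) :
    finrank F X = (leadingCoords X).ncard := by
  classical
  rw [(leadingCoordsEquiv X).finrank_eq, finrank_pi, ← Nat.card_coe_set_eq,
    Nat.card_eq_fintype_card]

end LeadingCoords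

namespace IsRREFWithPivots

variable {F : Type*} [Field F] {r n : ℕ} {M M' : Matrix (Fin r) (Fin n) F}
  {piv piv' : Fin r → Fin n}

lemma submatrix_pivots_eq_one (h : IsRREFWithPivots M piv) : M.submatrix id piv = 1 := by
  ext i i'
  rw [Matrix.submatrix_apply, id, Matrix.one_apply]
  split_ifs with hii
  · exact hii ▸ h.2.1 i
  · exact h.2.2.2 i' i hii

lemma isLeadingCoord (h : IsRREFWithPivots M piv) (i : Fin r) : IsLeadingCoord (M i) (piv i) :=
  ⟨by simp [h.2.1 i], h.2.2.1 i⟩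

lemma range_eq_leadingCoords (h : IsRREFWithPivots M piv) :
    Set.range piv = leadingCoords (span F (Set.range M)) := by
  have hsub : Set.range piv ⊆ leadingCoords (span F (Set.range M)) := by
    rintro _ ⟨i, rfl⟩
    exact ⟨M i, subset_span ⟨i, rfl⟩, h.isLeadingCoord i⟩
  refine Set.eq_of_subset_of_ncard_le hsub ?_
  calc (leadingCoords (span F (Set.range M))).ncard = finrank F (span F (Set.range M)) :=
        (finrank_eq_ncard_leadingCoords _).symm
    _ ≤ r := (finrank_range_le_card M).trans_eq (Fintype.card_fin r)
    _ = (Set.range piv).ncard := by rw [Set.ncard_range_of_injective h.1.injective, Nat.card_fin]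

lemma finrank_span (h : IsRREFWithPivots M piv) : finrank F (span F (Set.range M)) = r := by
  rw [finrank_eq_ncard_leadingCoords, ← h.range_eq_leadingCoords,
    Set.ncard_range_of_injective h.1.injective, Nat.card_fin]

lemma unique (h : IsRREFWithPivots M piv) (h' : IsRREFWithPivots M' piv')
    (hsp : span F (Set.range M) = span F (Set.range M')) : piv = piv' ∧ M = M' := by
  obtain rfl : piv = piv' := (h.1.range_inj h'.1).mp
    (by rw [h.range_eq_leadingCoords, h'.range_eq_leadingCoords, hsp])
  refine ⟨rfl, funext fun i => ?_⟩
  have hMi : M i ∈ span F (Set.range M) := subset_span ⟨i, rfl⟩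
  have hM'i : M' i ∈ span F (Set.range M) := hsp ▸ subset_span ⟨i, rfl⟩
  suffices restrictLeadingCoords _ ⟨M i, hMi⟩ = restrictLeadingCoords _ ⟨M' i, hM'i⟩ from
    congrArg Subtype.val (restrictLeadingCoords_injective _ this)
  funext ⟨j, hj⟩
  obtain ⟨i', rfl⟩ := h.range_eq_leadingCoords ▸ hj
  exact (congrFun₂ h.submatrix_pivots_eq_one i i').trans
    (congrFun₂ h'.submatrix_pivots_eq_one i i').symm

lemma of_submatrix_eq_one (hmono : StrictMono piv) (h1 : M.submatrix id piv = 1)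
    (hlead : ∀ i, ∃ i', IsLeadingCoord (M i) (piv i')) : IsRREFWithPivots M piv := by
  have happly : ∀ i i', M i (piv i') = if i = i' then 1 else 0 := fun i i' =>
    (congrFun₂ h1 i i').trans Matrix.one_apply
  refine ⟨hmono, fun i => by simp [happly], fun i j hj => ?_,
    fun i i' hii => by simp [happly, hii]⟩
  obtain ⟨i', hi'⟩ := hlead i
  obtain rfl : i = i' := by_contra fun hii => hi'.1 (by simp [happly, hii])
  exact hi'.2 j hj

end IsRREFWithPivots

section

variable {F : Type*} [Field F]

lemma exists_isRREFWithPivots {r n : ℕ} (X : Submodule F (Fin n → F)) (hX : finrank F X = r) :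
    ∃ (M : Matrix (Fin r) (Fin n) F) (piv : Fin r → Fin n),
      IsRREFWithPivots M piv ∧ span F (Set.range M) = X := by
  classical
  have hcard : Fintype.card (leadingCoords X) = r := by
    rw [← hX, finrank_eq_ncard_leadingCoords, ← Nat.card_coe_set_eq, Nat.card_eq_fintype_card]
  let e := Fintype.orderIsoFinOfCardEq (leadingCoords X) hcard
  let ψ := leadingCoordsEquiv X
  let piv : Fin r → Fin n := fun i => e i
  let M : Matrix (Fin r) (Fin n) F := fun i => ψ.symm (Pi.single (e i) 1)
  have hMX : ∀ i, M i ∈ X := fun i => (ψ.symm _).2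
  have h1 : M.submatrix id piv = 1 := by
    ext i i'
    calc M i (piv i') = ψ (ψ.symm (Pi.single (e i) 1)) (e i') := rfl
      _ = (1 : Matrix (Fin r) (Fin r) F) i i' := by
        simp [Matrix.one_apply, Pi.single_apply, eq_comm]
  have hlead : ∀ i, ∃ i', IsLeadingCoord (M i) (piv i') := by
    intro i
    have hne : M i ≠ 0 := fun h0 => by simpa [h0] using congrFun₂ h1 i i
    obtain ⟨j, hj⟩ := exists_isLeadingCoord hne
    exact ⟨e.symm ⟨j, M i, hMX i, hj⟩, by simpa [piv] using hj⟩
  have hM := IsRREFWithPivots.of_submatrix_eq_one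
    ((Subtype.strictMono_coe _).comp e.strictMono) h1 hlead
  refine ⟨M, piv, hM, eq_of_le_of_finrank_eq (span_le.mpr ?_) (by rw [hM.finrank_span, hX])⟩
  rintro _ ⟨i, rfl⟩
  exact hMX i

lemma card_rowSpaces_eq_card_rref {r n : ℕ} (P : (Fin r → Fin n) → Prop) :
    Nat.card {X : Submodule F (Fin n → F) // finrank F X = r ∧
        ∃ (M : Matrix (Fin r) (Fin n) F) (piv : Fin r → Fin n),
          IsRREFWithPivots M piv ∧ span F (Set.range M) = X ∧ P piv} =
      Nat.card {q : Matrix (Fin r) (Fin n) F × (Fin r → Fin n) //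
        IsRREFWithPivots q.1 q.2 ∧ P q.2} := by
  refine (Nat.card_eq_of_bijective (fun q => ⟨span F (Set.range q.1.1),
    q.2.1.finrank_span, q.1.1, q.1.2, q.2.1, rfl, q.2.2⟩) ⟨?_, ?_⟩).symm
  · intro q q' hsp
    obtain ⟨hpiv, hM⟩ := q.2.1.unique q'.2.1 (congrArg Subtype.val hsp)
    exact Subtype.ext (Prod.ext hM hpiv)
  · rintro ⟨X, -, M, piv, h, rfl, hP⟩
    exact ⟨⟨(M, piv), h, hP⟩, rfl⟩

lemma card_finrank_eq_card_rref {r n : ℕ} :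
    Nat.card {X : Submodule F (Fin n → F) // finrank F X = r} =
      Nat.card {q : Matrix (Fin r) (Fin n) F × (Fin r → Fin n) // IsRREFWithPivots q.1 q.2} := by
  have h := card_rowSpaces_eq_card_rref (F := F) (r := r) (n := n) fun _ => True
  simp only [and_true] at h
  rw [← h]
  exact Nat.card_congr (Equiv.subtypeEquivRight fun X =>
    ⟨fun hX => ⟨hX, exists_isRREFWithPivots X hX⟩, And.left⟩)

lemma isRREFWithPivots_append_iff {r k m : ℕ} {A : Matrix (Fin r) (Fin k) F}
    {B : Matrix (Fin r) (Fin m) F} {piv : Fin r → Fin k} :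
    IsRREFWithPivots (fun i => Fin.append (A i) (B i)) (Fin.castAdd m ∘ piv) ↔
      IsRREFWithPivots A piv := by
  have hright : ∀ i (j : Fin m), ¬ Fin.natAdd k j < Fin.castAdd m (piv i) := fun i j => by
    rw [Fin.lt_def, Fin.val_natAdd, Fin.val_castAdd]
    omega
  simp [IsRREFWithPivots, StrictMono, Fin.forall_fin_add, hright,
    (Fin.strictMono_castAdd m).lt_iff_lt]

lemma card_rref_pivots_lt {r k m : ℕ} [Fintype F] :
    Nat.card {q : Matrix (Fin r) (Fin (k + m)) F × (Fin r → Fin (k + m)) //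
        IsRREFWithPivots q.1 q.2 ∧ ∀ i, (q.2 i : ℕ) < k} =
      Nat.card {q : Matrix (Fin r) (Fin k) F × (Fin r → Fin k) // IsRREFWithPivots q.1 q.2} *
        Fintype.card F ^ (r * m) := by
  have hB : Nat.card (Matrix (Fin r) (Fin m) F) = Fintype.card F ^ (r * m) := by
    simp [Nat.card_eq_fintype_card, Matrix, ← pow_mul, mul_comm]
  rw [← hB, ← Nat.card_prod]
  refine (Nat.card_eq_of_bijective (fun q => ⟨(fun i => Fin.append (q.1.1.1 i) (q.2 i),
    Fin.castAdd m ∘ q.1.1.2), isRREFWithPivots_append_iff.mpr q.1.2,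
    fun i => (q.1.1.2 i).2⟩) ⟨?_, ?_⟩).symm
  · rintro ⟨⟨⟨A, p⟩, hA⟩, B⟩ ⟨⟨⟨A', p'⟩, hA'⟩, B'⟩ heq
    obtain ⟨hM, hp⟩ := Prod.mk.inj (congrArg Subtype.val heq)
    have hAB : ∀ i, A i = A' i ∧ B i = B' i := fun i =>
      Prod.ext_iff.mp ((Fin.appendEquiv k m).injective (a₁ := (A i, B i)) (a₂ := (A' i, B' i))
        (congrFun hM i))
    obtain rfl : A = A' := funext fun i => (hAB i).1
    obtain rfl : B = B' := funext fun i => (hAB i).2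
    obtain rfl : p = p' := (Fin.castAdd_injective k m).comp_left hp
    rfl
  · rintro ⟨⟨M, piv⟩, h, hk⟩
    let p : Fin r → Fin k := fun i => ⟨piv i, hk i⟩
    have hM : (fun i => Fin.append (fun j => M i (Fin.castAdd m j))
        (fun j => M i (Fin.natAdd k j))) = M := funext fun i => Fin.append_castAdd_natAdd
    have hA : IsRREFWithPivots (fun i j => M i (Fin.castAdd m j)) p :=
      (isRREFWithPivots_append_iff (B := fun i j => M i (Fin.natAdd k j))).mp
        (by rw [hM]; exact h)
    exact ⟨⟨⟨(_, p), hA⟩, fun i j => M i (Fin.natAdd k j)⟩,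
      Subtype.ext (Prod.ext hM rfl)⟩

end

theorem card_subspaces_idVec_supported_initial_general {F : Type*} [Field F] [Fintype F]
    {n k r : ℕ} (hkn : k ≤ n) :
    Nat.card {X : Submodule F (Fin n → F) //
        Module.finrank F X = r ∧
        ∃ (M : Matrix (Fin r) (Fin n) F) (piv : Fin r → Fin n),
          IsRREFWithPivots M piv ∧ Submodule.span F (Set.range M) = X ∧
          ∀ i, (piv i : ℕ) < k} =
      Nat.card {W : Submodule F (Fin k → F) // Module.finrank F W = r} *
        Fintype.card F ^ (r * (n - k)) := by
  obtain ⟨m, rfl⟩ := Nat.exists_eq_add_of_le hkn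
  rw [card_rowSpaces_eq_card_rref, card_finrank_eq_card_rref, Nat.add_sub_cancel_left]
  exact card_rref_pivots_lt

/-- For `0 ≤ r ≤ k ≤ n`, the number of `r`-dimensional
subspaces `X` of `F_q^n` whose identifying vector is supported in the first
`k` coordinates equals `[k choose r]_q * q^(r(n-k))`, where the Gaussian
binomial coefficient `[k choose r]_q` is the number of `r`-dimensional
subspaces of `F_q^k`. -/
theorem card_subspaces_idVec_supported_initial {F : Type*} [Field F] [Fintype F]
    {n k r : ℕ} (hrk : r ≤ k) (hkn : k ≤ n) :
    Nat.card {X : Submodule F (Fin n → F) //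
        Module.finrank F X = r ∧
        ∃ (M : Matrix (Fin r) (Fin n) F) (piv : Fin r → Fin n),
          IsRREFWithPivots M piv ∧ Submodule.span F (Set.range M) = X ∧
          ∀ i, (piv i : ℕ) < k} =
      Nat.card {W : Submodule F (Fin k → F) // Module.finrank F W = r} *
        Fintype.card F ^ (r * (n - k)) :=
  card_subspaces_idVec_supported_initial_general hkn
end
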